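/- Let $\sigma \in S_N$ and let $\mathcal{M}(\sigma) = \{(i, \sigma_i) : \sigma_i < \sigma_t \text{ for all } t < i\}$ be the set of left-to-right minima of $\sigma$. Then $\sigma$ is uniquely determined by the set $\mathcal{M}(\sigma)$ together with the pattern (relative order) of the subsequence of $\sigma$ obtained by deleting the entries belonging to $\mathcal{M}(\sigma)$. -/

import Mathlib

/-!
The two permutations agree on the left-to-right minima of `σ`, so, being bijections, they map
the remaining positions onto the same set of values. On that set
each value is pinned down by how many of the other values lie below it, and that number is
read off the pattern of the remaining entries.
-/

/-- Position `i` is a left-to-right minimum of the permutation `σ`. -/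
def IsLRMin {N : ℕ} (σ : Equiv.Perm (Fin N)) (i : Fin N) : Prop :=
  ∀ t : Fin N, t < i → σ i < σ t

open Finset

lemma Finset.strictMonoOn_card_filter_lt {β : Type*} [LinearOrder β] (S : Finset β) :
    StrictMonoOn (fun a => #{x ∈ S | x < a}) S := by
  intro a ha b _ hab
  refine card_lt_card <| (ssubset_iff_of_subset ?_).2 ⟨a, ?_, ?_⟩
  · exact monotone_filter_right S fun x _ (hx : x < a) => hx.trans hab
  · simpa using ⟨ha, hab⟩
  · simp

lemma Set.EqOn.of_image_eq_of_lt_iff {α β : Type*} [LinearOrder β] {s : Finset α}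
    {f g : α → β} (hf : Set.InjOn f s) (hg : Set.InjOn g s) (himage : s.image f = s.image g)
    (hlt : ∀ i ∈ s, ∀ j ∈ s, f i < f j ↔ g i < g j) : Set.EqOn f g s := by
  have rank_eq (φ : α → β) (hφ : Set.InjOn φ s) (i : α) :
      #{y ∈ s.image φ | y < φ i} = #{j ∈ s | φ j < φ i} := by
    rw [filter_image, card_image_of_injOn (hφ.mono (filter_subset _ s))]
  intro i hi
  refine (strictMonoOn_card_filter_lt (s.image f)).injOn (Finset.mem_image_of_mem f hi)
    (himage ▸ Finset.mem_image_of_mem g hi) ?_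
  rw [rank_eq f hf, himage, rank_eq g hg]
  exact congrArg card (filter_congr fun j hj => hlt j hj i hi)

lemma Equiv.image_compl_eq_of_eqOn {α β : Type*} [Fintype α] [DecidableEq α]
    [DecidableEq β] {f g : α ≃ β} {s : Finset α} (h : Set.EqOn f g s) :
    sᶜ.image f = sᶜ.image g := by
  apply coe_injective
  simp only [coe_image, coe_compl, Equiv.image_compl, h.image_eq]

theorem perm_determined_by_minima_and_pattern {N : ℕ} (σ τ : Equiv.Perm (Fin N))
    (hval : ∀ i, IsLRMin σ i → σ i = τ i)
    (hpatt : ∀ i j : Fin N, ¬IsLRMin σ i → ¬IsLRMin σ j → (σ i < σ j ↔ τ i < τ j)) :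
    σ = τ := by
  classical
  set M : Finset (Fin N) := {i | IsLRMin σ i}
  have hM : Set.EqOn σ τ M := fun i hi => hval i (mem_filter.1 hi).2
  have hMc : Set.EqOn σ τ ↑Mᶜ :=
    .of_image_eq_of_lt_iff σ.injective.injOn τ.injective.injOn (Equiv.image_compl_eq_of_eqOn hM)
      fun i hi j hj => hpatt i j (by simpa [M] using hi) (by simpa [M] using hj)
  exact Equiv.ext fun i => if hi : i ∈ M then hM hi else hMc (mem_compl.2 hi)
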